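/- For every λ ∈ ℂ, the 3-dimensional ℂ-algebra M³₀₅(λ) with basis e₁, e₂, e₃ and multiplication determined bilinearly by e₁e₁ = λe₃, e₂e₁ = e₃, e₂e₂ = e₃, and all other products of basis elements zero, satisfies all four Moufang identities, i.e. M³₀₅(λ) is a Moufang algebra. -/

import Mathlib

/-- The four Moufang identities for a binary multiplication `m` on an additive group. -/
def MoufangMulOn {B : Type*} [AddCommGroup B] (m : B → B → B) : Prop :=
  (∀ x y z, m (m x y) z - m x (m y z) = -(m (m z y) x - m z (m y x))) ∧
  (∀ x y z t, m (m (m x y) z) t + m (m (m z y) x) t = m x (m y (m z t)) + m z (m y (m x t))) ∧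
  (∀ x y z t, m t (m x (m y z)) + m t (m z (m y x)) = m (m (m t x) y) z + m (m (m t z) y) x) ∧
  (∀ x y z t, m (m x y) (m t z) + m (m z y) (m t x) = m (m x (m y t)) z + m (m z (m y t)) x)

/-- The multiplication of `M³₀₅(λ)` on `ℂ³`: `e₁e₁ = λe₃`, `e₂e₁ = e₃`, `e₂e₂ = e₃`,
all other products of basis vectors zero. -/
def m305mul (lam : ℂ) (x y : Fin 3 → ℂ) : Fin 3 → ℂ :=
  ![0, 0, lam * (x 0 * y 0) + x 1 * y 0 + x 1 * y 1]

/-!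
Every product in `M³₀₅(λ)` lies on the line `ℂ e₃`, and `e₃` annihilates the algebra from both
sides. Hence every product of three elements vanishes, whatever the bracketing, and each Moufang
identity reads `0 = 0`.
-/

theorem moufangMulOn_of_mul_mul_eq_zero {B : Type*} [AddCommGroup B] {m : B → B → B}
    (hleft : ∀ x y z, m (m x y) z = 0) (hright : ∀ x y z, m x (m y z) = 0) :
    MoufangMulOn m := by
  -- `0` is itself a product of three elements.
  have hzero_mul : ∀ z, m 0 z = 0 := fun z => by
    simpa only [hleft] using hleft (m 0 0) 0 z
  have hmul_zero : ∀ x, m x 0 = 0 := fun x => by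
    simpa only [hright] using hright x 0 (m 0 0)
  refine ⟨?_, ?_, ?_, ?_⟩ <;> intros <;> simp [hleft, hright, hzero_mul, hmul_zero]

theorem m305mul_mul_left_eq_zero (lam : ℂ) (x y z : Fin 3 → ℂ) :
    m305mul lam (m305mul lam x y) z = 0 := by
  funext i
  fin_cases i <;> simp [m305mul]

theorem m305mul_mul_right_eq_zero (lam : ℂ) (x y z : Fin 3 → ℂ) :
    m305mul lam x (m305mul lam y z) = 0 := by
  funext i
  fin_cases i <;> simp [m305mul]

/-- For every `λ ∈ ℂ`, the algebra `M³₀₅(λ)` satisfies all four Moufang identities. -/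
theorem m305_isMoufang (lam : ℂ) : MoufangMulOn (m305mul lam) :=
  moufangMulOn_of_mul_mul_eq_zero (m305mul_mul_left_eq_zero lam) (m305mul_mul_right_eq_zero lam)
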